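/- Let L > 0. Let u : [0,L]² → ℝ be of class C³ and v : [0,L]² → ℝ be of class C¹, and suppose that v_x(x,y) = u_y(x,y) and v_y(x,y) + u_xxx(x,y) = 0 for all (x,y) ∈ Ω, with boundary conditions u(0,y) = u(L,y) = 0 and v(0,y) = v(L,y) = 0 for all y ∈ [0,L]. Then the function Ẽ(y) := ½ ∫₀^L ( v(x,y)² + u_x(x,y)² ) dx is constant on [0,L]. -/

import Mathlib

/-!
With `e = v² + u_x²`, the system gives the local conservation law
`∂_y e = 2 (v v_y + u_x u_xy) = ∂_x (2 (u_x u_y - v u_xx))`,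
using `v_x = u_y`, `v_y = -u_xxx` and the symmetry of mixed partials. Differentiating under the
integral sign, `2 Ẽ'(y)` is the difference of this flux at `x = L` and `x = 0`, where it vanishes
because `v = 0` and `u_y = 0` there. Hence `Ẽ' = 0` on `(0, L)`, and `Ẽ` is continuous on `[0, L]`.
-/

open MeasureTheory Real

noncomputable section

/-- Partial derivative in `x` of `u(x,y)`. -/
def pdx (u : ℝ → ℝ → ℝ) (x y : ℝ) : ℝ := deriv (fun x' => u x' y) x

/-- Third partial derivative in `x` of `u(x,y)`. -/
def pdx3 (u : ℝ → ℝ → ℝ) (x y : ℝ) : ℝ := iteratedDeriv 3 (fun x' => u x' y) x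

/-- Partial derivative in `y` of `u(x,y)`. -/
def pdy (u : ℝ → ℝ → ℝ) (x y : ℝ) : ℝ := deriv (fun y' => u x y') y

/-- Second partial derivative in `y` of `u(x,y)`. -/
def pdy2 (u : ℝ → ℝ → ℝ) (x y : ℝ) : ℝ := iteratedDeriv 2 (fun y' => u x y') y

/-- The nonlocal operator `(∂ₓ⁻¹ w)(x,y) = -∫ₓ^L w(s,y) ds`. -/
def pxInv (L : ℝ) (w : ℝ → ℝ → ℝ) (x y : ℝ) : ℝ := -(∫ s in x..L, w s y)

/-- The adjoint nonlocal operator `((∂ₓ⁻¹)* w)(x,y) = ∫₀^x w(s,y) ds`. -/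
def pxInvStar (w : ℝ → ℝ → ℝ) (x y : ℝ) : ℝ := ∫ s in (0:ℝ)..x, w s y

open Set

variable {E : Type*} [NormedAddCommGroup E] [NormedSpace ℝ E]

def partialFst (f : ℝ × ℝ → E) (p : ℝ × ℝ) : E := fderiv ℝ f p (1, 0)
def partialSnd (f : ℝ × ℝ → E) (p : ℝ × ℝ) : E := fderiv ℝ f p (0, 1)

local notation "∂₁" => partialFst
local notation "∂₂" => partialSnd

section PartialDerivatives

variable {f : ℝ × ℝ → E}

theorem hasDerivAt_partialFst {x y : ℝ} (hf : DifferentiableAt ℝ f (x, y)) :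
    HasDerivAt (fun x' => f (x', y)) (∂₁ f (x, y)) x :=
  hf.hasFDerivAt.comp_hasDerivAt x ((hasDerivAt_id x).prodMk (hasDerivAt_const x y))

theorem hasDerivAt_partialSnd {x y : ℝ} (hf : DifferentiableAt ℝ f (x, y)) :
    HasDerivAt (fun y' => f (x, y')) (∂₂ f (x, y)) y :=
  hf.hasFDerivAt.comp_hasDerivAt y ((hasDerivAt_const y x).prodMk (hasDerivAt_id y))

theorem ContDiff.partialFst {m n : WithTop ℕ∞} (hf : ContDiff ℝ n f) (hmn : m + 1 ≤ n) :
    ContDiff ℝ m (∂₁ f) :=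
  (hf.fderiv_right hmn).clm_apply contDiff_const

theorem ContDiff.partialSnd {m n : WithTop ℕ∞} (hf : ContDiff ℝ n f) (hmn : m + 1 ≤ n) :
    ContDiff ℝ m (∂₂ f) :=
  (hf.fderiv_right hmn).clm_apply contDiff_const

theorem partialFst_partialSnd_comm (hf : ContDiff ℝ 2 f) : ∂₁ (∂₂ f) = ∂₂ (∂₁ f) := by
  funext p
  have hf' : HasFDerivAt (fderiv ℝ f) (fderiv ℝ (fderiv ℝ f) p) p :=
    ((hf.fderiv_right (m := 1) (by norm_num)).differentiable (by norm_num) p).hasFDerivAt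
  have hsecond (v w : ℝ × ℝ) :
      fderiv ℝ (fun q => fderiv ℝ f q v) p w = fderiv ℝ (fderiv ℝ f) p w v := by
    rw [(hf'.clm_apply (hasFDerivAt_const v p)).fderiv]
    simp
  exact (hsecond _ _).trans <| ((hf.contDiffAt).isSymmSndFDerivAt (by simp) _ _).trans
    (hsecond _ _).symm

theorem iterate_deriv_eq_partialFst_iterate {n : ℕ} (hf : ContDiff ℝ n f) (y : ℝ) :
    deriv^[n] (fun x => f (x, y)) = fun x => (∂₁)^[n] f (x, y) := by
  induction n generalizing f with
  | zero => rfl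
  | succ n ih =>
    have hderiv : deriv (fun x => f (x, y)) = fun x => ∂₁ f (x, y) :=
      funext fun x => (hasDerivAt_partialFst (hf.differentiable (by simp) _)).deriv
    rw [Function.iterate_succ_apply, Function.iterate_succ_apply, hderiv]
    exact ih (hf.partialFst (by simp))

theorem partialSnd_eq_zero_of_eventually {x y : ℝ} (hf : DifferentiableAt ℝ f (x, y))
    (h : ∀ᶠ y' in nhds y, f (x, y') = 0) : ∂₂ f (x, y) = 0 :=
  (hasDerivAt_partialSnd hf).unique ((hasDerivAt_const y 0).congr_of_eventuallyEq h)

end PartialDerivatives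

theorem hasDerivAt_intervalIntegral_of_continuous {F F' : ℝ × ℝ → E} (hF : Continuous F)
    (hF' : Continuous F') (hderiv : ∀ x y, HasDerivAt (fun y' => F (x, y')) (F' (x, y)) y)
    (a b y : ℝ) :
    HasDerivAt (fun y' => ∫ x in a..b, F (x, y')) (∫ x in a..b, F' (x, y)) y := by
  have hslice {G : ℝ × ℝ → E} (hG : Continuous G) (y' : ℝ) : Continuous fun x => G (x, y') :=
    hG.comp (continuous_id.prodMk continuous_const)
  obtain ⟨C, hC⟩ := (isCompact_uIcc.prod (isCompact_closedBall y 1)).exists_bound_of_continuousOn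
    hF'.continuousOn
  refine (intervalIntegral.hasDerivAt_integral_of_dominated_loc_of_deriv_le
    (F := fun y' x => F (x, y')) (F' := fun y' x => F' (x, y')) (bound := fun _ => C)
    (Metric.closedBall_mem_nhds y one_pos)
    (.of_forall fun y' => (hslice hF y').aestronglyMeasurable)
    ((hslice hF y).intervalIntegrable a b) (hslice hF' y).aestronglyMeasurable ?_
    intervalIntegrable_const ?_).2
  · exact .of_forall fun x hx y' hy' => hC (x, y') ⟨uIoc_subset_uIcc hx, hy'⟩
  · exact .of_forall fun x _ y' _ => hderiv x y'

theorem eq_of_hasDerivAt_eq_zero_on_Ioo {f : ℝ → ℝ} {a b : ℝ} (hf : ContinuousOn f (Icc a b))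
    (hf' : ∀ x ∈ Ioo a b, HasDerivAt f 0 x) : ∀ x ∈ Icc a b, f x = f a := by
  intro x hx
  rcases hx.1.eq_or_lt with rfl | hax
  · rfl
  obtain ⟨c, -, hc⟩ := exists_hasDerivAt_eq_slope f (fun _ => 0) hax
    (hf.mono (Icc_subset_Icc_right hx.2)) fun c hc => hf' c ⟨hc.1, hc.2.trans_le hx.2⟩
  rw [eq_comm, div_eq_zero_iff, sub_eq_zero, sub_eq_zero] at hc
  exact hc.resolve_right hax.ne'

section Energy

variable {U V : ℝ × ℝ → ℝ}

def transverseEnergy (U V : ℝ × ℝ → ℝ) (a b y : ℝ) : ℝ :=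
  ∫ x in a..b, V (x, y) ^ 2 + ∂₁ U (x, y) ^ 2

def transverseFlux (U V : ℝ × ℝ → ℝ) (p : ℝ × ℝ) : ℝ :=
  2 * (∂₁ U p * ∂₂ U p - V p * ∂₁ (∂₁ U) p)

def transverseEnergyRate (U V : ℝ × ℝ → ℝ) (p : ℝ × ℝ) : ℝ :=
  2 * (V p * ∂₂ V p + ∂₁ U p * ∂₂ (∂₁ U) p)

theorem continuous_transverseFlux (hU : ContDiff ℝ 2 U) (hV : Continuous V) :
    Continuous (transverseFlux U V) := by
  have hUx : ContDiff ℝ 1 (∂₁ U) := hU.partialFst (by norm_num)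
  exact continuous_const.mul <|
    (hUx.continuous.mul (hU.partialSnd (m := 0) (by norm_num)).continuous).sub
      (hV.mul (hUx.partialFst (m := 0) le_rfl).continuous)

theorem continuous_transverseEnergyRate (hU : ContDiff ℝ 2 U) (hV : ContDiff ℝ 1 V) :
    Continuous (transverseEnergyRate U V) := by
  have hUx : ContDiff ℝ 1 (∂₁ U) := hU.partialFst (by norm_num)
  exact continuous_const.mul <| (hV.continuous.mul (hV.partialSnd (m := 0) le_rfl).continuous).add
    (hUx.continuous.mul (hUx.partialSnd (m := 0) le_rfl).continuous)

theorem hasDerivAt_transverseEnergy (hU : ContDiff ℝ 2 U) (hV : ContDiff ℝ 1 V) (a b y : ℝ) :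
    HasDerivAt (transverseEnergy U V a b) (∫ x in a..b, transverseEnergyRate U V (x, y)) y := by
  have hUx : ContDiff ℝ 1 (∂₁ U) := hU.partialFst (by norm_num)
  refine hasDerivAt_intervalIntegral_of_continuous (F := fun p => V p ^ 2 + ∂₁ U p ^ 2)
    ((hV.continuous.pow 2).add (hUx.continuous.pow 2)) (continuous_transverseEnergyRate hU hV)
    (fun x y => ?_) a b y
  refine (((hasDerivAt_partialSnd (hV.differentiable one_ne_zero (x, y))).pow 2).add
    ((hasDerivAt_partialSnd (hUx.differentiable one_ne_zero (x, y))).pow 2)).congr_deriv ?_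
  simp only [transverseEnergyRate, Nat.cast_ofNat, Nat.add_one_sub_one, pow_one]
  ring

theorem hasDerivAt_transverseFlux (hU : ContDiff ℝ 3 U) (hV : ContDiff ℝ 1 V) {x y : ℝ}
    (hVx : ∂₁ V (x, y) = ∂₂ U (x, y)) (hVy : ∂₂ V (x, y) + ∂₁ (∂₁ (∂₁ U)) (x, y) = 0) :
    HasDerivAt (fun x' => transverseFlux U V (x', y)) (transverseEnergyRate U V (x, y)) x := by
  have hUx : ContDiff ℝ 2 (∂₁ U) := hU.partialFst (by norm_num)
  have hUxx : ContDiff ℝ 1 (∂₁ (∂₁ U)) := hUx.partialFst (by norm_num)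
  have hUy : ContDiff ℝ 2 (∂₂ U) := hU.partialSnd (by norm_num)
  have hmixed : ∂₁ (∂₂ U) (x, y) = ∂₂ (∂₁ U) (x, y) :=
    congrFun (partialFst_partialSnd_comm (hU.of_le (by norm_num))) (x, y)
  have hflux := ((hasDerivAt_partialFst (hUx.differentiable (by norm_num) (x, y))).mul
      (hasDerivAt_partialFst (hUy.differentiable (by norm_num) (x, y)))).sub
    ((hasDerivAt_partialFst (hV.differentiable one_ne_zero (x, y))).mul
      (hasDerivAt_partialFst (hUxx.differentiable one_ne_zero (x, y))))
  refine (hflux.const_mul 2).congr_deriv ?_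
  rw [transverseEnergyRate, hmixed, hVx, eq_neg_of_add_eq_zero_left hVy]
  ring

theorem transverseFlux_eq_zero (hU : Differentiable ℝ U) {x y : ℝ}
    (hU0 : ∀ᶠ y' in nhds y, U (x, y') = 0) (hV0 : V (x, y) = 0) :
    transverseFlux U V (x, y) = 0 := by
  simp [transverseFlux, partialSnd_eq_zero_of_eventually (hU _) hU0, hV0]

theorem transverseEnergy_eq_of_kpSystem {a b c d : ℝ} (hU : ContDiff ℝ 3 U)
    (hV : ContDiff ℝ 1 V) (hab : a ≤ b)
    (hpde : ∀ x ∈ Ioo a b, ∀ y ∈ Ioo c d,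
      ∂₁ V (x, y) = ∂₂ U (x, y) ∧ ∂₂ V (x, y) + ∂₁ (∂₁ (∂₁ U)) (x, y) = 0)
    (hbdry : ∀ y ∈ Icc c d, U (a, y) = 0 ∧ U (b, y) = 0 ∧ V (a, y) = 0 ∧ V (b, y) = 0) :
    ∀ y ∈ Icc c d, transverseEnergy U V a b y = transverseEnergy U V a b c := by
  have hU2 : ContDiff ℝ 2 U := hU.of_le (by norm_num)
  have hE := hasDerivAt_transverseEnergy hU2 hV a b
  refine eq_of_hasDerivAt_eq_zero_on_Ioo
    (continuous_iff_continuousAt.2 fun y => (hE y).continuousAt).continuousOn fun y hy => ?_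
  have hUd : Differentiable ℝ U := hU.differentiable (by norm_num)
  have hnear : Icc c d ∈ nhds y := Icc_mem_nhds hy.1 hy.2
  have hbdry_y := hbdry y (Ioo_subset_Icc_self hy)
  have hflux_a : transverseFlux U V (a, y) = 0 := transverseFlux_eq_zero hUd
    (Filter.mem_of_superset hnear fun y' hy' => (hbdry y' hy').1) hbdry_y.2.2.1
  have hflux_b : transverseFlux U V (b, y) = 0 := transverseFlux_eq_zero hUd
    (Filter.mem_of_superset hnear fun y' hy' => (hbdry y' hy').2.1) hbdry_y.2.2.2
  have hslice {F : ℝ × ℝ → ℝ} (hF : Continuous F) : Continuous fun x => F (x, y) :=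
    hF.comp (continuous_id.prodMk continuous_const)
  have hftc : ∫ x in a..b, transverseEnergyRate U V (x, y)
      = transverseFlux U V (b, y) - transverseFlux U V (a, y) :=
    intervalIntegral.integral_eq_sub_of_hasDerivAt_of_le hab
      (hslice (continuous_transverseFlux hU2 hV.continuous)).continuousOn
      (fun x hx => hasDerivAt_transverseFlux hU hV (hpde x hx y hy).1 (hpde x hx y hy).2)
      ((hslice (continuous_transverseEnergyRate hU2 hV)).intervalIntegrable a b)
  simpa [hftc, hflux_a, hflux_b] using hE y

end Energy

section Curried

variable {u : ℝ → ℝ → ℝ} {x y : ℝ}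

theorem pdx_eq_partialFst (hu : DifferentiableAt ℝ (Function.uncurry u) (x, y)) :
    pdx u x y = ∂₁ (Function.uncurry u) (x, y) :=
  (hasDerivAt_partialFst hu).deriv

theorem pdy_eq_partialSnd (hu : DifferentiableAt ℝ (Function.uncurry u) (x, y)) :
    pdy u x y = ∂₂ (Function.uncurry u) (x, y) :=
  (hasDerivAt_partialSnd hu).deriv

theorem pdx3_eq_partialFst_iterate (hu : ContDiff ℝ 3 (Function.uncurry u)) :
    pdx3 u x y = ∂₁ (∂₁ (∂₁ (Function.uncurry u))) (x, y) := by
  rw [pdx3, iteratedDeriv_eq_iterate]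
  exact congrFun (iterate_deriv_eq_partialFst_iterate hu y) x

end Curried

/-- Constancy of the transverse energy functional
`Ẽ(y) = ½ ∫₀^L (v(x,y)² + u_x(x,y)²) dx` for the first-order system
`v_x = u_y`, `v_y + u_xxx = 0` with `u(0,y) = u(L,y) = v(0,y) = v(L,y) = 0`. -/
theorem kp_transverse_energy_constant (L : ℝ) (hL : 0 < L)
    (u v : ℝ → ℝ → ℝ)
    (hu : ContDiff ℝ 3 (fun p : ℝ × ℝ => u p.1 p.2))
    (hv : ContDiff ℝ 1 (fun p : ℝ × ℝ => v p.1 p.2))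
    (heq : ∀ x ∈ Set.Ioo (0:ℝ) L, ∀ y ∈ Set.Ioo (0:ℝ) L,
      pdx v x y = pdy u x y ∧ pdy v x y + pdx3 u x y = 0)
    (hb : ∀ y ∈ Set.Icc (0:ℝ) L,
      u 0 y = 0 ∧ u L y = 0 ∧ v 0 y = 0 ∧ v L y = 0) :
    ∀ y₁ ∈ Set.Icc (0:ℝ) L, ∀ y₂ ∈ Set.Icc (0:ℝ) L,
      (1/2) * (∫ x in (0:ℝ)..L, ((v x y₁)^2 + (pdx u x y₁)^2))
        = (1/2) * (∫ x in (0:ℝ)..L, ((v x y₂)^2 + (pdx u x y₂)^2)) := by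
  have hud : Differentiable ℝ (Function.uncurry u) := hu.differentiable (by norm_num)
  have hvd : Differentiable ℝ (Function.uncurry v) := hv.differentiable one_ne_zero
  have henergy (y : ℝ) : ∫ x in (0:ℝ)..L, ((v x y)^2 + (pdx u x y)^2)
      = transverseEnergy (Function.uncurry u) (Function.uncurry v) 0 L y := by
    simp only [pdx_eq_partialFst (hud _)]
    rfl
  have hconst := transverseEnergy_eq_of_kpSystem (U := Function.uncurry u)
    (V := Function.uncurry v) hu hv hL.le (fun x hx y hy => by
      rw [← pdx_eq_partialFst (hvd _), ← pdy_eq_partialSnd (hud _),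
        ← pdy_eq_partialSnd (hvd _), ← pdx3_eq_partialFst_iterate hu]
      exact heq x hx y hy) hb
  intro y₁ hy₁ y₂ hy₂
  rw [henergy, henergy, hconst y₁ hy₁, hconst y₂ hy₂]

end
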